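/- Let n ≥ 5 be an integer with n ≡ 2 (mod 3). Then the maximum of mis(G) over all simple graphs G on n vertices equals 2 · 3^{(n−2)/3}; that is, every graph G on n vertices satisfies mis(G) ≤ 2 · 3^{(n−2)/3}, and some graph on n vertices attains this value. -/

import Mathlib

/-- A finset of vertices is independent: no two of its elements are adjacent. -/
def IsIndepFinset {V : Type*} (G : SimpleGraph V) (s : Finset V) : Prop :=
  ∀ ⦃a⦄, a ∈ s → ∀ ⦃b⦄, b ∈ s → ¬ G.Adj a b

/-- A finset of vertices is a maximal independent set: it is independent and is not
properly contained in any other independent set. -/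
def IsMaxIndepFinset {V : Type*} (G : SimpleGraph V) (s : Finset V) : Prop :=
  IsIndepFinset G s ∧ ∀ t : Finset V, IsIndepFinset G t → s ⊆ t → s = t

/-- `mis G` is the number of maximal independent sets of `G`. -/
noncomputable def mis {V : Type*} (G : SimpleGraph V) : ℕ :=
  Set.ncard {s : Finset V | IsMaxIndepFinset G s}

/-- `G` has an induced triangle matching of size `t`: there are `t` pairwise disjoint
triples of vertices, each triple pairwise adjacent (a triangle), with no edges between
distinct triples (so the induced subgraph on their union is a disjoint union of `t`
triangles). -/
def HasInducedTriangleMatching {V : Type*} (G : SimpleGraph V) (t : ℕ) : Prop :=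
  ∃ f : Fin t → Finset V,
    (∀ i, (f i).card = 3) ∧
    (∀ i j, i ≠ j → Disjoint (f i) (f j)) ∧
    (∀ i, ∀ a ∈ f i, ∀ b ∈ f i, a ≠ b → G.Adj a b) ∧
    (∀ i j, i ≠ j → ∀ a ∈ f i, ∀ b ∈ f j, ¬ G.Adj a b)

/-- `G` has an induced matching of size `t`: there are `t` pairwise disjoint
pairs of vertices, each pair adjacent, with no edges between distinct pairs. -/
def HasInducedMatching {V : Type*} (G : SimpleGraph V) (t : ℕ) : Prop :=
  ∃ f : Fin t → Finset V,
    (∀ i, (f i).card = 2) ∧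
    (∀ i j, i ≠ j → Disjoint (f i) (f j)) ∧
    (∀ i, ∀ a ∈ f i, ∀ b ∈ f i, a ≠ b → G.Adj a b) ∧
    (∀ i j, i ≠ j → ∀ a ∈ f i, ∀ b ∈ f j, ¬ G.Adj a b)

/-!
Every maximal independent set meets the closed neighbourhood `N[v]` of a vertex `v` of minimum
degree `d`, and those containing a fixed `u ∈ N[v]` inject into the maximal independent sets of
`G - N[u]`, a graph on at most `n - d - 1` vertices. By induction `mis G ≤ (d + 1) g(n - d - 1)`,
and `k g(m) ≤ g(m + k)` for the Moon–Moser function `g`, with `g(3t + 2) = 2 ⋅ 3 ^ t`.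
Equality holds for `K₂` plus `t` disjoint triangles: a maximal independent set of a disjoint
union of cliques picks exactly one vertex from each clique.
-/

open Finset SimpleGraph

-- `g(n) = 3 ^ (n / 3)`, `4 ⋅ 3 ^ ((n - 4) / 3)`, `2 ⋅ 3 ^ ((n - 2) / 3)` for `n ≡ 0, 1, 2 (mod 3)`,
-- `n ≥ 2`; these are the extremal values of `mis` on `n` vertices.
def moonMoser : ℕ → ℕ
  | 0 => 1
  | 1 => 1
  | 2 => 2
  | 3 => 3
  | 4 => 4
  | n + 5 => 3 * moonMoser (n + 2)

theorem moonMoser_le_succ (n : ℕ) : moonMoser n ≤ moonMoser (n + 1) := by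
  induction n using moonMoser.induct with
  | case6 n ih => exact Nat.mul_le_mul_left 3 ih
  | _ => decide

theorem moonMoser_mono : Monotone moonMoser := monotone_nat_of_le_succ moonMoser_le_succ

theorem two_mul_moonMoser_le (n : ℕ) : 2 * moonMoser n ≤ moonMoser (n + 2) := by
  induction n using moonMoser.induct with
  | case6 n ih => exact (Nat.mul_left_comm 2 3 _).trans_le (Nat.mul_le_mul_left 3 ih)
  | _ => decide

theorem three_mul_moonMoser_le (n : ℕ) : 3 * moonMoser n ≤ moonMoser (n + 3) := by
  match n with
  | 0 | 1 => decide
  | n + 2 => rfl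

theorem mul_moonMoser_le {k : ℕ} (hk : 1 ≤ k) (n : ℕ) : k * moonMoser n ≤ moonMoser (n + k) := by
  induction k using Nat.strong_induction_on with
  | _ k ih =>
  match k, hk with
  | 1, _ => simpa using moonMoser_le_succ n
  | 2, _ => exact two_mul_moonMoser_le n
  | 3, _ => exact three_mul_moonMoser_le n
  | 4, _ => linarith [two_mul_moonMoser_le n, two_mul_moonMoser_le (n + 2)]
  | k + 5, _ =>
    calc (k + 5) * moonMoser n ≤ 3 * ((k + 2) * moonMoser n) := by nlinarith
      _ ≤ 3 * moonMoser (n + (k + 2)) := by gcongr; exact ih (k + 2) (by omega) (by omega)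
      _ ≤ moonMoser (n + (k + 5)) := three_mul_moonMoser_le _

theorem moonMoser_three_mul_add_two (m : ℕ) : moonMoser (3 * m + 2) = 2 * 3 ^ m := by
  induction m with
  | zero => rfl
  | succ m ih => rw [show 3 * (m + 1) + 2 = 3 * m + 5 by ring, moonMoser, ih]; ring

section
variable {V W : Type*} {G : SimpleGraph V} {H : SimpleGraph W} {s : Finset V}

theorem isMaxIndepFinset_iff :
    IsMaxIndepFinset G s ↔ IsIndepFinset G s ∧ ∀ x, (∀ y ∈ s, ¬G.Adj x y) → x ∈ s := by
  classical
  refine and_congr_right fun hs => ⟨fun hmax x hx => ?_, fun hdom t ht hst => ?_⟩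
  · have hins : IsIndepFinset G (insert x s) := by
      intro a ha b hb
      rw [mem_insert] at ha hb
      rcases ha with rfl | ha <;> rcases hb with rfl | hb
      · exact G.loopless.irrefl _
      · exact hx b hb
      · exact fun hab => hx a ha hab.symm
      · exact hs ha hb
    exact hmax _ hins (subset_insert x s) ▸ mem_insert_self x s
  · exact hst.antisymm fun x hx => hdom x fun y hy => ht hx (hst hy)

theorem isIndepFinset_map_iff (e : G ≃g H) :
    IsIndepFinset H (s.map e.toEquiv.toEmbedding) ↔ IsIndepFinset G s := by
  simp only [IsIndepFinset, forall_mem_map]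
  exact forall₂_congr fun a _ => forall₂_congr fun b _ => e.map_adj_iff.not

theorem isMaxIndepFinset_map_iff (e : G ≃g H) :
    IsMaxIndepFinset H (s.map e.toEquiv.toEmbedding) ↔ IsMaxIndepFinset G s := by
  rw [isMaxIndepFinset_iff, isMaxIndepFinset_iff, isIndepFinset_map_iff,
    ← e.toEquiv.forall_congr_right]
  simp only [forall_mem_map]
  exact and_congr_right fun _ => forall_congr' fun a =>
    imp_congr (forall₂_congr fun b _ => e.map_adj_iff.not) (mem_map' _)

theorem mis_congr (e : G ≃g H) : mis G = mis H :=
  Nat.card_congr <| e.toEquiv.finsetCongr.subtypeEquiv fun _ => (isMaxIndepFinset_map_iff e).symm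

end

section
variable {V : Type*} (G : SimpleGraph V)

theorem ncard_isMaxIndepFinset_mem_le [Finite V] (u : V) :
    {s | IsMaxIndepFinset G s ∧ u ∈ s}.ncard ≤ mis (G.induce {x | x ≠ u ∧ ¬G.Adj u x}) := by
  classical
  set W : Set V := {x | x ≠ u ∧ ¬G.Adj u x}
  have hW : ∀ s, IsIndepFinset G s → u ∈ s → ∀ x ∈ s.erase u, x ∈ W := fun s hs hu x hx =>
    ⟨(mem_erase.1 hx).1, hs hu (mem_erase.1 hx).2⟩
  have hrestore : ∀ s, IsIndepFinset G s → u ∈ s →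
      insert u (((s.erase u).subtype (· ∈ W)).map (Function.Embedding.subtype _)) = s :=
    fun s hs hu => by rw [subtype_map_of_mem (hW s hs hu), insert_erase hu]
  refine Set.ncard_le_ncard_of_injOn (fun s => (s.erase u).subtype (· ∈ W)) ?_ ?_
  · rintro s ⟨hs, hu⟩
    rw [isMaxIndepFinset_iff] at hs
    rw [Set.mem_ofPred_eq, isMaxIndepFinset_iff]
    refine ⟨fun a ha b hb => hs.1 (mem_of_mem_erase (mem_subtype.1 ha))
      (mem_of_mem_erase (mem_subtype.1 hb)), fun x hx => ?_⟩
    rw [mem_subtype, mem_erase]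
    refine ⟨x.2.1, hs.2 x fun y hy => ?_⟩
    rcases eq_or_ne y u with rfl | hyu
    · exact fun h => x.2.2 h.symm
    · have hy' : y ∈ s.erase u := mem_erase.2 ⟨hyu, hy⟩
      exact hx ⟨y, hW s hs.1 hu y hy'⟩ (mem_subtype.2 hy')
  · rintro s ⟨hs, hu⟩ t ⟨ht, hu'⟩ hst
    rw [← hrestore s hs.1 hu, ← hrestore t ht.1 hu']
    simp only at hst
    rw [hst]

theorem mis_le_sum_ncard_mem [Fintype V] [DecidableEq V] [DecidableRel G.Adj] (v : V) :
    mis G ≤ ∑ u ∈ insert v (G.neighborFinset v), {s | IsMaxIndepFinset G s ∧ u ∈ s}.ncard := by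
  refine (Set.ncard_le_ncard (fun s hs => ?_)).trans (set_ncard_biUnion_le _ _)
  obtain ⟨u, hu, hus⟩ : ∃ u ∈ insert v (G.neighborFinset v), u ∈ s := by
    by_contra! h
    refine h v (mem_insert_self _ _) ((isMaxIndepFinset_iff.1 hs).2 v fun y hy hvy => h y ?_ hy)
    exact mem_insert_of_mem ((G.mem_neighborFinset _ _).2 hvy)
  exact Set.mem_biUnion hu ⟨hs, hus⟩

theorem card_compl_closedNbhd_add_degree [Fintype V] [DecidableRel G.Adj] (u : V) :
    Nat.card {x | x ≠ u ∧ ¬G.Adj u x} + G.degree u + 1 = Fintype.card V := by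
  classical
  rw [Nat.card_coe_set_eq, Set.ncard_eq_toFinset_card', Set.toFinset_ofPred]
  have hclosed : ({x | ¬(x ≠ u ∧ ¬G.Adj u x)} : Finset V) = insert u (G.neighborFinset u) := by
    ext x
    simp [or_iff_not_imp_left, eq_comm]
  rw [← card_univ, ← card_filter_add_card_filter_not (s := univ) (fun x => x ≠ u ∧ ¬G.Adj u x),
    hclosed, card_insert_of_notMem (notMem_neighborFinset_self G u), card_neighborFinset_eq_degree,
    add_assoc]

end

theorem mis_le_moonMoser {V : Type*} [Fintype V] (G : SimpleGraph V) :
    mis G ≤ moonMoser (Fintype.card V) := by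
  classical
  induction hn : Fintype.card V using Nat.strong_induction_on generalizing V with
  | _ n ih =>
  rcases isEmpty_or_nonempty V with hV | hV
  · rw [← hn, Fintype.card_eq_zero]
    exact Set.ncard_le_one_of_subsingleton _
  obtain ⟨v, -, hv⟩ := univ.exists_min_image (G.degree ·) univ_nonempty
  set d := G.degree v
  have hdn : d + 1 ≤ n := hn ▸ G.degree_lt_card_verts v
  have hcontaining : ∀ u, {s | IsMaxIndepFinset G s ∧ u ∈ s}.ncard ≤ moonMoser (n - (d + 1)) := by
    intro u
    have hcard := card_compl_closedNbhd_add_degree G u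
    have hdu : d ≤ G.degree u := hv u (mem_univ u)
    calc _ ≤ mis (G.induce {x | x ≠ u ∧ ¬G.Adj u x}) := ncard_isMaxIndepFinset_mem_le G u
      _ ≤ moonMoser (Fintype.card {x | x ≠ u ∧ ¬G.Adj u x}) :=
        ih _ (by rw [← Nat.card_eq_fintype_card]; omega) _ rfl
      _ ≤ moonMoser (n - (d + 1)) := moonMoser_mono (by rw [← Nat.card_eq_fintype_card]; omega)
  calc mis G
      ≤ ∑ u ∈ insert v (G.neighborFinset v), {s | IsMaxIndepFinset G s ∧ u ∈ s}.ncard :=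
        mis_le_sum_ncard_mem G v
    _ ≤ ∑ _u ∈ insert v (G.neighborFinset v), moonMoser (n - (d + 1)) :=
        sum_le_sum fun u _ => hcontaining u
    _ = (d + 1) * moonMoser (n - (d + 1)) := by
        rw [sum_const, card_insert_of_notMem (notMem_neighborFinset_self G v),
          card_neighborFinset_eq_degree, smul_eq_mul]
    _ ≤ moonMoser n := by
        simpa [Nat.sub_add_cancel hdn] using mul_moonMoser_le (Nat.le_add_left 1 d) (n - (d + 1))

section
variable {ι : Type*} {V : ι → Type*}

theorem compl_completeMultipartiteGraph_adj {x y : Σ i, V i} :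
    (completeMultipartiteGraph V)ᶜ.Adj x y ↔ x ≠ y ∧ x.1 = y.1 := by
  simp

variable [Fintype ι]

def sectionFinset (σ : ∀ i, V i) : Finset (Σ i, V i) :=
  univ.map ⟨fun i => ⟨i, σ i⟩, fun _ _ h => congrArg Sigma.fst h⟩

theorem mem_sectionFinset {σ : ∀ i, V i} {x : Σ i, V i} : x ∈ sectionFinset σ ↔ σ x.1 = x.2 := by
  simp only [sectionFinset, mem_map, mem_univ, true_and]
  constructor
  · rintro ⟨i, rfl⟩
    rfl
  · intro h
    refine ⟨x.1, ?_⟩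
    show (⟨x.1, σ x.1⟩ : Σ i, V i) = x
    rw [h]

theorem sectionFinset_injective : Function.Injective (sectionFinset (V := V)) := by
  intro σ τ h
  funext i
  have hi : (⟨i, σ i⟩ : Σ i, V i) ∈ sectionFinset τ := h ▸ mem_sectionFinset.2 rfl
  exact (mem_sectionFinset.1 hi).symm

theorem isMaxIndepFinset_compl_completeMultipartiteGraph_iff [∀ i, Nonempty (V i)]
    {s : Finset (Σ i, V i)} :
    IsMaxIndepFinset (completeMultipartiteGraph V)ᶜ s ↔ ∃ σ, sectionFinset σ = s := by
  simp only [isMaxIndepFinset_iff, IsIndepFinset, compl_completeMultipartiteGraph_adj]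
  constructor
  · rintro ⟨hind, hdom⟩
    have hmeet : ∀ i, ∃ a : V i, ⟨i, a⟩ ∈ s := by
      intro i
      by_contra! h
      obtain ⟨a⟩ : Nonempty (V i) := inferInstance
      refine h a (hdom ⟨i, a⟩ ?_)
      rintro ⟨j, b⟩ hb ⟨-, rfl⟩
      exact h b hb
    choose σ hσ using hmeet
    refine ⟨σ, Finset.ext fun ⟨i, a⟩ => ⟨fun ha => ?_, fun ha => ?_⟩⟩
    · obtain rfl : σ i = a := mem_sectionFinset.1 ha
      exact hσ i
    · exact mem_sectionFinset.2 <| sigma_mk_injective <|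
        not_not.1 fun hne => hind (hσ i) ha ⟨hne, rfl⟩
  · rintro ⟨σ, rfl⟩
    refine ⟨fun ⟨i, a⟩ ha ⟨j, b⟩ hb => ?_, fun x hx => ?_⟩
    · obtain rfl : σ i = a := mem_sectionFinset.1 ha
      obtain rfl : σ j = b := mem_sectionFinset.1 hb
      rintro ⟨hne, rfl⟩
      exact hne rfl
    · by_contra hxσ
      exact hx ⟨x.1, σ x.1⟩ (mem_sectionFinset.2 rfl)
        ⟨fun h => hxσ (h ▸ mem_sectionFinset.2 rfl), rfl⟩

theorem mis_compl_completeMultipartiteGraph [∀ i, Nonempty (V i)] :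
    mis (completeMultipartiteGraph V)ᶜ = ∏ i, Nat.card (V i) := by
  have hrange : {s | IsMaxIndepFinset (completeMultipartiteGraph V)ᶜ s} = Set.range sectionFinset :=
    Set.ext fun _ => isMaxIndepFinset_compl_completeMultipartiteGraph_iff
  rw [mis, hrange, Set.ncard_range_of_injective sectionFinset_injective, Nat.card_pi]

end

theorem exists_mis_eq_two_mul_three_pow (t : ℕ) :
    ∃ G : SimpleGraph (Fin (3 * t + 2)), mis G = 2 * 3 ^ t := by
  -- `K₂` on the index `none`, a triangle on each `some i`
  let V : Option (Fin t) → Type := fun o => Fin (o.elim 2 fun _ => 3)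
  have hcard : Fintype.card (Σ o, V o) = 3 * t + 2 := by
    simp [V, Fintype.card_sigma, Fintype.sum_option]
    ring
  have : ∀ o, Nonempty (V o) := by
    rintro (_ | _)
    exacts [⟨(0 : Fin 2)⟩, ⟨(0 : Fin 3)⟩]
  refine ⟨(completeMultipartiteGraph V)ᶜ.overFin hcard, ?_⟩
  rw [← mis_congr (overFinIso _ hcard), mis_compl_completeMultipartiteGraph]
  simp [V, Fintype.prod_option]

theorem moon_moser_two_mod_three_general (n : ℕ) (hmod : n % 3 = 2) :
    (∀ G : SimpleGraph (Fin n), mis G ≤ 2 * 3 ^ ((n - 2) / 3)) ∧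
    (∃ G : SimpleGraph (Fin n), mis G = 2 * 3 ^ ((n - 2) / 3)) := by
  obtain ⟨t, rfl⟩ : ∃ t, n = 3 * t + 2 := ⟨n / 3, by omega⟩
  rw [show (3 * t + 2 - 2) / 3 = t by omega]
  refine ⟨fun G => ?_, exists_mis_eq_two_mul_three_pow t⟩
  simpa [moonMoser_three_mul_add_two] using mis_le_moonMoser G

theorem moon_moser_two_mod_three (n : ℕ) (hn : 5 ≤ n) (hmod : n % 3 = 2) :
    (∀ G : SimpleGraph (Fin n), mis G ≤ 2 * 3 ^ ((n - 2) / 3)) ∧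
    (∃ G : SimpleGraph (Fin n), mis G = 2 * 3 ^ ((n - 2) / 3)) :=
  moon_moser_two_mod_three_general n hmod
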